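/- arXiv:0709.1678 — 3 statements merged into one kernel-verified Lean document; each statement's English description precedes it below -/
import Mathlib

section
/- Let m ≥ 1 be an integer, ρ > 0, and 0 < c₁ ≤ c₂ constants. Let H : ℝ → M_m(ℝ) be continuous, let D : ℝ → M_m(ℝ) be such that each D(t) is a real diagonal matrix, and let N : ℝ → M_m(ℂ) be continuously differentiable, satisfying: N(t)H(t) = D(t)N(t) for all t; c₁|v| ≤ |N(t)v| ≤ c₂|v| for all t ∈ ℝ and v ∈ ℂ^m; and t ↦ ‖N′(t)‖ is integrable on ℝ. If v : ℝ → ℂ^m is differentiable and solves v′(t) = i ρ H(t) v(t) for all t ∈ ℝ, then for all t ∈ ℝ: |v(t)|² ≤ (c₂²/c₁²) |v(0)|² · exp( (2/c₁) ∫_ℝ ‖N′(s)‖ ds ). -/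
/-!
With `w = N v`, the intertwining relation `N H = D N` turns `v' = iρHv` into
`w' = N'v + iρDw`. The second term is skew-adjoint because `D` is real diagonal, so it does not
change `‖w‖²`, and `|d/dt ‖w‖²| = 2|Re⟪w, N'v⟫| ≤ (2/c₁)‖N'‖‖w‖²` by the lower bound on `N`.
Gronwall's inequality, applied forward and backward in time, gives
`‖w t‖² ≤ ‖w 0‖² exp((2/c₁)∫‖N'‖)`, and the bounds `c₁|v| ≤ |Nv| ≤ c₂|v|` convert this back to `v`.
-/

open MeasureTheory

/-- The action of an `m × m` complex matrix on `ℂ^m` with the Euclidean norm. -/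
noncomputable def matAct {m : ℕ} (A : Matrix (Fin m) (Fin m) ℂ)
    (v : EuclideanSpace ℂ (Fin m)) : EuclideanSpace ℂ (Fin m) :=
  Matrix.toEuclideanLin A v

/-- The operator norm of an `m × m` complex matrix with respect to the Euclidean norm. -/
noncomputable def matOpNorm {m : ℕ} (A : Matrix (Fin m) (Fin m) ℂ) : ℝ :=
  ‖LinearMap.toContinuousLinearMap (Matrix.toEuclideanLin A)‖

open Real
open scoped Matrix InnerProductSpace

section MatrixAction

variable {m : ℕ}

theorem matAct_mul (A B : Matrix (Fin m) (Fin m) ℂ) (v : EuclideanSpace ℂ (Fin m)) :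
    matAct (A * B) v = matAct A (matAct B v) := by
  simp [matAct]

theorem matAct_smul (A : Matrix (Fin m) (Fin m) ℂ) (c : ℂ) (v : EuclideanSpace ℂ (Fin m)) :
    matAct A (c • v) = c • matAct A v :=
  map_smul _ c v

theorem matOpNorm_nonneg (A : Matrix (Fin m) (Fin m) ℂ) : 0 ≤ matOpNorm A :=
  norm_nonneg _

theorem norm_matAct_le (A : Matrix (Fin m) (Fin m) ℂ) (v : EuclideanSpace ℂ (Fin m)) :
    ‖matAct A v‖ ≤ matOpNorm A * ‖v‖ :=
  (Matrix.toEuclideanCLM (𝕜 := ℂ) A).le_opNorm v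

theorem continuous_matOpNorm : Continuous (matOpNorm : Matrix (Fin m) (Fin m) ℂ → ℝ) :=
  (LinearMap.continuous_of_finiteDimensional
    (Matrix.toEuclideanLin.trans LinearMap.toContinuousLinearMap :
      Matrix (Fin m) (Fin m) ℂ ≃ₗ[ℂ] _).toLinearMap).norm

theorem hasDerivAt_matAct {N : ℝ → Matrix (Fin m) (Fin m) ℂ} {A : Matrix (Fin m) (Fin m) ℂ}
    {v : ℝ → EuclideanSpace ℂ (Fin m)} {v' : EuclideanSpace ℂ (Fin m)} {t : ℝ}
    (hN : ∀ i j, HasDerivAt (fun s => N s i j) (A i j) t) (hv : HasDerivAt v v' t) :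
    HasDerivAt (fun s => matAct (N s) (v s)) (matAct A (v t) + matAct (N t) v') t := by
  have hcoord : ∀ j, HasDerivAt (fun s => v s j) (v' j) t := fun j =>
    (PiLp.hasFDerivAt_apply 2 (v t) j).comp_hasDerivAt t hv
  have hmulVec : HasDerivAt (fun s => N s *ᵥ WithLp.ofLp (v s))
      (A *ᵥ WithLp.ofLp (v t) + N t *ᵥ WithLp.ofLp v') t := by
    refine hasDerivAt_pi.2 fun i => ?_
    simp only [Matrix.mulVec, dotProduct, Pi.add_apply, ← Finset.sum_add_distrib]
    exact HasDerivAt.fun_sum fun j _ => (hN i j).mul (hcoord j)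
  exact (PiLp.hasFDerivAt_toLp 2 _).comp_hasDerivAt t hmulVec

theorem re_inner_I_mul_smul_matAct_self {A : Matrix (Fin m) (Fin m) ℂ} (hA : A.IsHermitian)
    (r : ℝ) (w : EuclideanSpace ℂ (Fin m)) :
    RCLike.re ⟪w, (Complex.I * r) • matAct A w⟫_ℂ = 0 := by
  have him := (Matrix.isSymmetric_toEuclideanLin_iff.2 hA).im_inner_self_apply w
  simp_all [matAct]

end MatrixAction

theorem Matrix.IsDiag.isHermitian_map_ofReal {n : Type*} {D : Matrix n n ℝ} (hD : D.IsDiag) :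
    (D.map Complex.ofReal).IsHermitian :=
  (Matrix.isHermitian_iff_isSymm.2 hD.isSymm).map _ fun x => (Complex.conj_ofReal x).symm

theorem HasDerivAt.norm_sq_eq_two_mul_re_inner {𝕜 E : Type*} [RCLike 𝕜] [NormedAddCommGroup E]
    [InnerProductSpace 𝕜 E] [NormedSpace ℝ E] {f : ℝ → E} {f' : E} {x : ℝ}
    (hf : HasDerivAt f f' x) :
    HasDerivAt (‖f ·‖ ^ 2) (2 * RCLike.re ⟪f x, f'⟫_𝕜) x := by
  have h := (RCLike.reCLM (K := 𝕜)).hasFDerivAt.comp_hasDerivAt x (hf.inner 𝕜 hf)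
  simp only [Function.comp_def, RCLike.reCLM_apply, inner_self_eq_norm_sq, map_add,
    inner_re_symm (𝕜 := 𝕜) f' (f x)] at h
  exact h.congr_deriv (two_mul _).symm

theorem hasDerivAt_norm_sq_matAct_of_intertwining {m : ℕ} {ρ t : ℝ}
    {H D : Matrix (Fin m) (Fin m) ℝ} (hD : D.IsDiag) {N : ℝ → Matrix (Fin m) (Fin m) ℂ}
    {A : Matrix (Fin m) (Fin m) ℂ}
    (hNH : N t * H.map Complex.ofReal = D.map Complex.ofReal * N t)
    (hN : ∀ i j, HasDerivAt (fun s => N s i j) (A i j) t) {v : ℝ → EuclideanSpace ℂ (Fin m)}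
    (hv : HasDerivAt v ((Complex.I * ρ) • matAct (H.map Complex.ofReal) (v t)) t) :
    HasDerivAt (fun s => ‖matAct (N s) (v s)‖ ^ 2)
      (2 * RCLike.re ⟪matAct (N t) (v t), matAct A (v t)⟫_ℂ) t := by
  have hw := hasDerivAt_matAct hN hv
  rw [matAct_smul, ← matAct_mul, hNH, matAct_mul] at hw
  have h := hw.norm_sq_eq_two_mul_re_inner (𝕜 := ℂ)
  rwa [inner_add_right, map_add,
    re_inner_I_mul_smul_matAct_self hD.isHermitian_map_ofReal, add_zero] at h

theorem abs_re_inner_le_div_mul_norm_sq {𝕜 E : Type*} [RCLike 𝕜] [NormedAddCommGroup E]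
    [InnerProductSpace 𝕜 E] {x y z : E} {a c : ℝ} (ha : 0 ≤ a) (hc : 0 < c)
    (hy : ‖y‖ ≤ a * ‖z‖) (hz : c * ‖z‖ ≤ ‖x‖) :
    |RCLike.re ⟪x, y⟫_𝕜| ≤ a / c * ‖x‖ ^ 2 := by
  have hz' : ‖z‖ ≤ ‖x‖ / c := by rwa [le_div_iff₀' hc]
  calc |RCLike.re ⟪x, y⟫_𝕜| ≤ ‖⟪x, y⟫_𝕜‖ := RCLike.abs_re_le_norm _
    _ ≤ ‖x‖ * ‖y‖ := norm_inner_le_norm x y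
    _ ≤ ‖x‖ * (a * (‖x‖ / c)) := by gcongr; exact hy.trans (by gcongr)
    _ = a / c * ‖x‖ ^ 2 := by ring

theorem abs_intervalIntegral_le_integral {f : ℝ → ℝ} (hf : Integrable f) (hf₀ : ∀ s, 0 ≤ f s)
    (a b : ℝ) : |∫ s in a..b, f s| ≤ ∫ s, f s :=
  calc |∫ s in a..b, f s| ≤ ∫ s in Set.uIoc a b, ‖f s‖ :=
        intervalIntegral.norm_integral_le_integral_norm_uIoc (f := f)
    _ = ∫ s in Set.uIoc a b, f s := by simp_rw [Real.norm_of_nonneg (hf₀ _)]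
    _ ≤ ∫ s, f s := setIntegral_le_integral hf (.of_forall hf₀)

section Gronwall

variable {φ φ' g g' : ℝ → ℝ}

theorem hasDerivAt_mul_exp_neg (hφ : ∀ t, HasDerivAt φ (φ' t) t)
    (hg : ∀ t, HasDerivAt g (g' t) t) (t : ℝ) :
    HasDerivAt (fun t => φ t * exp (-g t)) ((φ' t - g' t * φ t) * exp (-g t)) t :=
  ((hφ t).fun_mul (hg t).fun_neg.exp).congr_deriv (by ring)

theorem antitone_mul_exp_neg_of_deriv_le (hφ : ∀ t, HasDerivAt φ (φ' t) t)
    (hg : ∀ t, HasDerivAt g (g' t) t) (h : ∀ t, φ' t ≤ g' t * φ t) :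
    Antitone fun t => φ t * exp (-g t) :=
  antitone_of_hasDerivAt_nonpos (hasDerivAt_mul_exp_neg hφ hg) fun t =>
    mul_nonpos_of_nonpos_of_nonneg (sub_nonpos.2 (h t)) (exp_pos _).le

theorem monotone_mul_exp_neg_of_le_deriv (hφ : ∀ t, HasDerivAt φ (φ' t) t)
    (hg : ∀ t, HasDerivAt g (g' t) t) (h : ∀ t, g' t * φ t ≤ φ' t) :
    Monotone fun t => φ t * exp (-g t) :=
  monotone_of_hasDerivAt_nonneg (hasDerivAt_mul_exp_neg hφ hg) fun t =>
    mul_nonneg (sub_nonneg.2 (h t)) (exp_pos _).le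

theorem le_mul_exp_abs_intervalIntegral_of_abs_deriv_le {K : ℝ → ℝ}
    (hφ : ∀ t, HasDerivAt φ (φ' t) t) (hK : Continuous K) (hφ₀ : 0 ≤ φ 0)
    (hbound : ∀ t, |φ' t| ≤ K t * φ t) (t : ℝ) :
    φ t ≤ φ 0 * exp |∫ s in (0 : ℝ)..t, K s| := by
  set G : ℝ → ℝ := fun t => ∫ s in (0 : ℝ)..t, K s
  have hG : ∀ t, HasDerivAt G (K t) t := fun t => (hK.integral_hasStrictDerivAt 0 t).hasDerivAt
  have hG₀ : G 0 = 0 := intervalIntegral.integral_same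
  rcases le_total 0 t with ht | ht
  · have hanti := antitone_mul_exp_neg_of_deriv_le hφ hG
      (fun s => (le_abs_self _).trans (hbound s)) ht
    simp only [hG₀, neg_zero, exp_zero, mul_one] at hanti
    calc φ t = φ t * exp (-G t) * exp (G t) := by
          rw [mul_assoc, ← exp_add, neg_add_cancel, exp_zero, mul_one]
      _ ≤ φ 0 * exp (G t) := by gcongr
      _ ≤ φ 0 * exp |G t| := by gcongr; exact le_abs_self _
  · have hmono := monotone_mul_exp_neg_of_le_deriv (g := fun s => -G s) hφ (fun s => (hG s).neg)
      (fun s => by linarith [neg_abs_le (φ' s), hbound s]) ht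
    simp only [hG₀, neg_zero, exp_zero, mul_one, neg_neg] at hmono
    calc φ t = φ t * exp (G t) * exp (-G t) := by
          rw [mul_assoc, ← exp_add, add_neg_cancel, exp_zero, mul_one]
      _ ≤ φ 0 * exp (-G t) := by gcongr
      _ ≤ φ 0 * exp |G t| := by gcongr; exact neg_le_abs _

end Gronwall

theorem energy_estimate_general
    (m : ℕ) (ρ c₁ c₂ : ℝ) (hc₁ : 0 < c₁)
    (H : ℝ → Matrix (Fin m) (Fin m) ℝ)
    (D : ℝ → Matrix (Fin m) (Fin m) ℝ) (hD : ∀ t, (D t).IsDiag)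
    (N N' : ℝ → Matrix (Fin m) (Fin m) ℂ)
    (hN : ∀ (t : ℝ) (i j : Fin m), HasDerivAt (fun s => N s i j) (N' t i j) t)
    (hN' : Continuous N')
    (hNH : ∀ t, N t * (H t).map (Complex.ofReal) = (D t).map (Complex.ofReal) * N t)
    (hNlow : ∀ (t : ℝ) (v : EuclideanSpace ℂ (Fin m)), c₁ * ‖v‖ ≤ ‖matAct (N t) v‖)
    (hNup : ∀ (t : ℝ) (v : EuclideanSpace ℂ (Fin m)), ‖matAct (N t) v‖ ≤ c₂ * ‖v‖)
    (hint : Integrable (fun t => matOpNorm (N' t)))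
    (v : ℝ → EuclideanSpace ℂ (Fin m))
    (hv : ∀ t : ℝ, HasDerivAt v
      ((Complex.I * (ρ : ℂ)) • matAct ((H t).map (Complex.ofReal)) (v t)) t) :
    ∀ t : ℝ, ‖v t‖ ^ 2 ≤ (c₂ ^ 2 / c₁ ^ 2) * ‖v 0‖ ^ 2 *
      Real.exp ((2 / c₁) * ∫ s : ℝ, matOpNorm (N' s)) := by
  intro t
  set w : ℝ → EuclideanSpace ℂ (Fin m) := fun s => matAct (N s) (v s)
  set K : ℝ → ℝ := fun s => 2 / c₁ * matOpNorm (N' s)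
  have hnormSq : ∀ s, HasDerivAt (‖w ·‖ ^ 2) (2 * RCLike.re ⟪w s, matAct (N' s) (v s)⟫_ℂ) s :=
    fun s => hasDerivAt_norm_sq_matAct_of_intertwining (hD s) (hNH s) (hN s) (hv s)
  have hbound : ∀ s, |2 * RCLike.re ⟪w s, matAct (N' s) (v s)⟫_ℂ| ≤ K s * ‖w s‖ ^ 2 := by
    intro s
    rw [abs_mul, abs_two]
    calc 2 * |RCLike.re ⟪w s, matAct (N' s) (v s)⟫_ℂ|
        ≤ 2 * (matOpNorm (N' s) / c₁ * ‖w s‖ ^ 2) := by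
          gcongr
          exact abs_re_inner_le_div_mul_norm_sq (matOpNorm_nonneg _) hc₁
            (norm_matAct_le (N' s) (v s)) (hNlow s (v s))
      _ = K s * ‖w s‖ ^ 2 := by ring
  have hgronwall := le_mul_exp_abs_intervalIntegral_of_abs_deriv_le hnormSq
    (continuous_const.mul (continuous_matOpNorm.comp hN')) (sq_nonneg _) hbound t
  have hK : |∫ s in (0 : ℝ)..t, K s| ≤ 2 / c₁ * ∫ s, matOpNorm (N' s) := by
    rw [← integral_const_mul]
    exact abs_intervalIntegral_le_integral (hint.const_mul _)
      (fun s => mul_nonneg (by positivity) (matOpNorm_nonneg _)) 0 t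
  have hlow : (c₁ * ‖v t‖) ^ 2 ≤ ‖w t‖ ^ 2 := by gcongr; exact hNlow t (v t)
  have hup : ‖w 0‖ ^ 2 ≤ (c₂ * ‖v 0‖) ^ 2 := by gcongr; exact hNup 0 (v 0)
  rw [div_mul_eq_mul_div, div_mul_eq_mul_div, le_div_iff₀ (by positivity)]
  calc ‖v t‖ ^ 2 * c₁ ^ 2 = (c₁ * ‖v t‖) ^ 2 := by ring
    _ ≤ ‖w 0‖ ^ 2 * exp |∫ s in (0 : ℝ)..t, K s| := hlow.trans hgronwall
    _ ≤ c₂ ^ 2 * ‖v 0‖ ^ 2 * exp (2 / c₁ * ∫ s, matOpNorm (N' s)) := by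
      rw [← mul_pow]; gcongr

/-- Energy estimate (Lemma 2.2): if `N` diagonalizes the continuous real
matrix family `H` to the real diagonal family `D`, `N` is uniformly bounded above and
below, `‖N'‖` is integrable, and `v' = i ρ H v`, then
`‖v t‖² ≤ (c₂²/c₁²) ‖v 0‖² exp((2/c₁) ∫ ‖N'‖)`. -/
theorem energy_estimate
    (m : ℕ) (hm : 1 ≤ m) (ρ c₁ c₂ : ℝ) (hρ : 0 < ρ) (hc₁ : 0 < c₁) (hc₁₂ : c₁ ≤ c₂)
    (H : ℝ → Matrix (Fin m) (Fin m) ℝ) (hH : Continuous H)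
    (D : ℝ → Matrix (Fin m) (Fin m) ℝ) (hD : ∀ t, (D t).IsDiag)
    (N N' : ℝ → Matrix (Fin m) (Fin m) ℂ)
    (hN : ∀ (t : ℝ) (i j : Fin m), HasDerivAt (fun s => N s i j) (N' t i j) t)
    (hN' : Continuous N')
    (hNH : ∀ t, N t * (H t).map (Complex.ofReal) = (D t).map (Complex.ofReal) * N t)
    (hNlow : ∀ (t : ℝ) (v : EuclideanSpace ℂ (Fin m)), c₁ * ‖v‖ ≤ ‖matAct (N t) v‖)
    (hNup : ∀ (t : ℝ) (v : EuclideanSpace ℂ (Fin m)), ‖matAct (N t) v‖ ≤ c₂ * ‖v‖)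
    (hint : Integrable (fun t => matOpNorm (N' t)))
    (v : ℝ → EuclideanSpace ℂ (Fin m))
    (hv : ∀ t : ℝ, HasDerivAt v
      ((Complex.I * (ρ : ℂ)) • matAct ((H t).map (Complex.ofReal)) (v t)) t) :
    ∀ t : ℝ, ‖v t‖ ^ 2 ≤ (c₂ ^ 2 / c₁ ^ 2) * ‖v 0‖ ^ 2 *
      Real.exp ((2 / c₁) * ∫ s : ℝ, matOpNorm (N' s)) :=
  energy_estimate_general m ρ c₁ c₂ hc₁ H D hD N N' hN hN' hNH hNlow hNup hint v hv
end

section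
/- Let m ≥ 1 be an integer and ρ > 0. Let d_1, …, d_m : ℝ → ℝ be continuous; set D(t) = diag(d_1(t), …, d_m(t)) and Φ(t) = diag(e^{iρ∫_0^t d_1(s)ds}, …, e^{iρ∫_0^t d_m(s)ds}). Let H : ℝ → M_m(ℝ) be continuous and N : ℝ → M_m(ℂ) be continuously differentiable with: N(t)H(t) = D(t)N(t) for all t; inf_{t∈ℝ} |det N(t)| > 0; sup_{t∈ℝ} ‖N(t)‖ < ∞; and t ↦ ‖N′(t)‖ integrable on ℝ. Set C(t) = Φ(t)^{-1} N′(t) N(t)^{-1} Φ(t). Then t ↦ ‖C(t)‖ is integrable on ℝ, and for every differentiable solution v : ℝ → ℂ^m of v′(t) = i ρ H(t) v(t) there exist vectors α_+, α_- ∈ ℂ^m and differentiable functions ε_+, ε_- : ℝ → ℂ^m such that: v(t) = N(t)^{-1} Φ(t) (α_+ + ε_+(t)) for t > 0 and v(t) = N(t)^{-1} Φ(t) (α_- + ε_-(t)) for t < 0; ε_±(t) → 0 as t → ±∞; and ε_±′(t) = C(t) (α_± + ε_±(t)) for all t. -/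
/-!
Put `w(t) = Φ(t)⁻¹ N(t) v(t)`. Since `N H = D N` and `Φ' = iρ D Φ` with `D`, `Φ` diagonal, the
leading terms cancel and `w' = Φ⁻¹ N' v = C w`. The matrix `Φ(t)` is unitary and `N(t)⁻¹` is
uniformly bounded (the matrices with `‖A‖ ≤ B` and `|det A| ≥ ε₀` form a compact set on which
inversion is continuous), so `‖C‖ ≤ K ‖N'‖` is integrable. Grönwall's inequality then makes `w`
bounded, hence `w' = C w` is integrable and `w` has limits `α_±` at `±∞`; take `ε_± = w - α_±`.
-/

open MeasureTheory

open Filter Matrix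
open scoped Matrix.Norms.L2Operator

section Gronwall

variable {E : Type*} [NormedAddCommGroup E] [NormedSpace ℝ E] {f f' : ℝ → E} {g : ℝ → ℝ}

theorem norm_le_mul_exp_intervalIntegral_of_norm_deriv_le (hg : Continuous g)
    (hf : ∀ t, HasDerivAt f (f' t) t) (bound : ∀ t, ‖f' t‖ ≤ g t * ‖f t‖) {T : ℝ}
    (hT : 0 ≤ T) : ‖f T‖ ≤ ‖f 0‖ * Real.exp (∫ s in 0..T, g s) := by
  set G : ℝ → ℝ := fun t => ∫ s in 0..t, g s
  -- Compare with the strict supersolutions `(‖f 0‖ + δ) exp (G t + δ t)` and let `δ → 0`.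
  set B : ℝ → ℝ → ℝ := fun δ t => (‖f 0‖ + δ) * Real.exp (G t + δ * t)
  have hB : ∀ δ > 0, ‖f T‖ ≤ B δ T := fun δ hδ => by
    have hBpos : ∀ t, 0 < B δ t := fun t => by positivity
    refine image_norm_le_of_norm_deriv_right_lt_deriv_boundary
      (fun t _ => (hf t).continuousAt.continuousWithinAt) (fun t _ => (hf t).hasDerivWithinAt)
      (B' := fun t => (g t + δ) * B δ t) (by simp [B, G, hδ.le]) (fun t => ?_)
      (fun t _ ht => ?_) (Set.right_mem_Icc.2 hT)
    · have hexp : HasDerivAt (fun s => G s + δ * s) (g t + δ) t :=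
        ((hg.integral_hasStrictDerivAt 0 t).hasDerivAt.fun_add
          ((hasDerivAt_id t).const_mul δ)).congr_deriv (by rw [mul_one])
      exact (hexp.exp.const_mul _).congr_deriv (by simp only [B]; ring)
    · calc ‖f' t‖ ≤ g t * B δ t := ht ▸ bound t
        _ < (g t + δ) * B δ t := by nlinarith [hBpos t]
  have hcont : Continuous fun δ => B δ T := by fun_prop
  have := (hcont.tendsto 0).mono_left (nhdsWithin_le_nhds (s := Set.Ioi 0))
  simpa [B, G] using ge_of_tendsto this (eventually_nhdsWithin_of_forall hB)

theorem norm_le_mul_exp_integral_of_norm_deriv_le (hg : Continuous g) (hg0 : ∀ t, 0 ≤ g t)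
    (hgi : Integrable g) (hf : ∀ t, HasDerivAt f (f' t) t)
    (bound : ∀ t, ‖f' t‖ ≤ g t * ‖f t‖) (t : ℝ) :
    ‖f t‖ ≤ ‖f 0‖ * Real.exp (∫ s, g s) := by
  have hle : ∀ a b, a ≤ b → ∫ s in a..b, g s ≤ ∫ s, g s := fun a b hab => by
    rw [intervalIntegral.integral_of_le hab]
    exact setIntegral_le_integral hgi (ae_of_all _ hg0)
  rcases le_total 0 t with ht | ht
  · calc ‖f t‖ ≤ ‖f 0‖ * Real.exp (∫ s in 0..t, g s) :=
          norm_le_mul_exp_intervalIntegral_of_norm_deriv_le hg hf bound ht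
      _ ≤ _ := by gcongr; exact hle 0 t ht
  · have hrev := norm_le_mul_exp_intervalIntegral_of_norm_deriv_le (f := fun s => f (-s))
      (g := fun s => g (-s)) (hg.comp continuous_neg)
      (fun s => (hf (-s)).scomp s (hasDerivAt_neg s)) (fun s => by simpa using bound (-s))
      (neg_nonneg.2 ht)
    rw [intervalIntegral.integral_comp_neg] at hrev
    calc ‖f t‖ ≤ ‖f 0‖ * Real.exp (∫ s in t..0, g s) := by simpa using hrev
      _ ≤ _ := by gcongr; exact hle t 0 ht

theorem integrable_of_norm_le_mul_norm_of_hasDerivAt [CompleteSpace E] (hg : Continuous g)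
    (hg0 : ∀ t, 0 ≤ g t) (hgi : Integrable g) (hf : ∀ t, HasDerivAt f (f' t) t)
    (bound : ∀ t, ‖f' t‖ ≤ g t * ‖f t‖) : Integrable f' := by
  have hderiv : deriv f = f' := funext fun t => (hf t).deriv
  refine (hgi.mul_const (‖f 0‖ * Real.exp (∫ s, g s))).mono'
    (hderiv ▸ aestronglyMeasurable_deriv f volume) (ae_of_all _ fun t => ?_)
  calc ‖f' t‖ ≤ g t * ‖f t‖ := bound t
    _ ≤ g t * (‖f 0‖ * Real.exp (∫ s, g s)) := by
      gcongr
      · exact hg0 t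
      · exact norm_le_mul_exp_integral_of_norm_deriv_le hg hg0 hgi hf bound t

theorem tendsto_limUnder_of_norm_deriv_le_mul_norm [CompleteSpace E] (hg : Continuous g)
    (hg0 : ∀ t, 0 ≤ g t) (hgi : Integrable g) (hf : ∀ t, HasDerivAt f (f' t) t)
    (bound : ∀ t, ‖f' t‖ ≤ g t * ‖f t‖) :
    Tendsto f atTop (nhds (limUnder atTop f)) ∧ Tendsto f atBot (nhds (limUnder atBot f)) :=
  have hf'i := integrable_of_norm_le_mul_norm_of_hasDerivAt hg hg0 hgi hf bound
  ⟨tendsto_limUnder_of_hasDerivAt_of_integrableOn_Ioi (a := 0) (fun t _ => hf t) hf'i.integrableOn,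
    tendsto_limUnder_of_hasDerivAt_of_integrableOn_Iic (a := 0) (fun t _ => hf t) hf'i.integrableOn⟩

end Gronwall

section MatrixAnalysis

variable {n 𝕜 : Type*} [RCLike 𝕜]

theorem continuous_of_hasDerivAt_apply {P P' : ℝ → Matrix n n 𝕜}
    (hP : ∀ t i j, HasDerivAt (fun s => P s i j) (P' t i j) t) : Continuous P :=
  continuous_matrix fun i j => continuous_iff_continuousAt.2 fun t => (hP t i j).continuousAt

variable [Fintype n]

theorem hasDerivAt_euclideanSpace_iff {v : ℝ → EuclideanSpace 𝕜 n} {v' : EuclideanSpace 𝕜 n}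
    {t : ℝ} : HasDerivAt v v' t ↔ ∀ i, HasDerivAt (fun s => v s i) (v' i) t := by
  let e := PiLp.continuousLinearEquiv 2 ℝ fun _ : n => 𝕜
  refine ⟨fun h => hasDerivAt_pi.1 (e.hasFDerivAt.comp_hasDerivAt t h), fun h => ?_⟩
  exact e.symm.hasFDerivAt.comp_hasDerivAt t (hasDerivAt_pi.2 h)

variable [DecidableEq n]

theorem toEuclideanCLM_mul_apply (A B : Matrix n n 𝕜) (x : EuclideanSpace 𝕜 n) :
    toEuclideanCLM (𝕜 := 𝕜) (A * B) x =
      toEuclideanCLM (𝕜 := 𝕜) A (toEuclideanCLM (𝕜 := 𝕜) B x) := by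
  rw [map_mul]; rfl

theorem hasDerivAt_toEuclideanCLM_apply {P : ℝ → Matrix n n 𝕜} {P' : Matrix n n 𝕜}
    {v : ℝ → EuclideanSpace 𝕜 n} {v' : EuclideanSpace 𝕜 n} {t : ℝ}
    (hP : ∀ i j, HasDerivAt (fun s => P s i j) (P' i j) t) (hv : HasDerivAt v v' t) :
    HasDerivAt (fun s => toEuclideanCLM (𝕜 := 𝕜) (P s) (v s))
      (toEuclideanCLM (𝕜 := 𝕜) P' (v t) + toEuclideanCLM (𝕜 := 𝕜) (P t) v') t := by
  rw [hasDerivAt_euclideanSpace_iff] at hv ⊢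
  intro i
  simpa [mulVec, dotProduct, Finset.sum_add_distrib] using
    HasDerivAt.fun_sum fun j _ => (hP i j).mul (hv j)

theorem continuousAt_matrix_inv_of_det_ne_zero {A : Matrix n n 𝕜} (h : A.det ≠ 0) :
    ContinuousAt Inv.inv A :=
  continuousAt_matrix_inv A (NormedRing.inverse_continuousAt (Units.mk0 _ h))

theorem exists_norm_inv_le_of_norm_le_of_le_norm_det (B : ℝ) {ε : ℝ} (hε : 0 < ε) :
    ∃ K, ∀ A : Matrix n n 𝕜, ‖A‖ ≤ B → ε ≤ ‖A.det‖ → ‖A⁻¹‖ ≤ K := by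
  have := FiniteDimensional.proper_rclike 𝕜 (Matrix n n 𝕜)
  set S := Metric.closedBall (0 : Matrix n n 𝕜) B ∩ {A | ε ≤ ‖A.det‖}
  have hS : IsCompact S := (isCompact_closedBall 0 B).inter_right
    (isClosed_le continuous_const continuous_id.matrix_det.norm)
  have hinv : ContinuousOn Inv.inv S := fun A hA =>
    (continuousAt_matrix_inv_of_det_ne_zero
      (norm_pos_iff.1 (hε.trans_le hA.2))).continuousWithinAt
  obtain ⟨K, hK⟩ := hS.exists_bound_of_continuousOn hinv
  exact ⟨K, fun A hAB hAdet => hK A ⟨mem_closedBall_zero_iff.2 hAB, hAdet⟩⟩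

end MatrixAnalysis

section PhaseDiag

variable {n : Type*} [Fintype n] [DecidableEq n]

noncomputable def phaseDiag (ρ : ℝ) (d : n → ℝ → ℝ) (t : ℝ) : Matrix n n ℂ :=
  diagonal fun j => Complex.exp (Complex.I * (ρ : ℂ) * ((∫ s in (0:ℝ)..t, d j s : ℝ) : ℂ))

theorem phaseDiag_mul_phaseDiag_neg (ρ : ℝ) (d : n → ℝ → ℝ) (t : ℝ) :
    phaseDiag ρ d t * phaseDiag (-ρ) d t = 1 := by
  simp only [phaseDiag, diagonal_mul_diagonal, ← Complex.exp_add]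
  simp

theorem inv_phaseDiag (ρ : ℝ) (d : n → ℝ → ℝ) (t : ℝ) :
    (phaseDiag ρ d t)⁻¹ = phaseDiag (-ρ) d t :=
  inv_eq_right_inv (phaseDiag_mul_phaseDiag_neg ρ d t)

theorem norm_phaseDiag_le_one (ρ : ℝ) (d : n → ℝ → ℝ) (t : ℝ) : ‖phaseDiag ρ d t‖ ≤ 1 := by
  rw [phaseDiag, l2_opNorm_diagonal]
  refine pi_norm_le_iff_of_nonneg zero_le_one |>.2 fun j => ?_
  rw [Complex.norm_exp]
  simp

theorem hasDerivAt_phaseDiag_apply (ρ : ℝ) {d : n → ℝ → ℝ} (hd : ∀ j, Continuous (d j))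
    (t : ℝ) (i j : n) :
    HasDerivAt (fun s => phaseDiag ρ d s i j)
      (((Complex.I * ρ) • diagonal (fun k => (d k t : ℂ)) * phaseDiag ρ d t) i j) t := by
  rcases eq_or_ne i j with rfl | hij
  · simp only [phaseDiag, smul_mul_assoc, diagonal_mul_diagonal, Matrix.smul_apply,
      diagonal_apply_eq, smul_eq_mul]
    have := ((((hd i).integral_hasStrictDerivAt 0 t).hasDerivAt.ofReal_comp).const_mul
      (Complex.I * ρ)).cexp
    exact this.congr_deriv (by ring)
  · simp [phaseDiag, diagonal_apply_ne _ hij, hasDerivAt_const]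

theorem continuous_phaseDiag (ρ : ℝ) {d : n → ℝ → ℝ} (hd : ∀ j, Continuous (d j)) :
    Continuous (phaseDiag ρ d) :=
  continuous_of_hasDerivAt_apply fun t => hasDerivAt_phaseDiag_apply ρ hd t

theorem hasDerivAt_phaseDiag_neg_mul_apply {ρ : ℝ} {d : n → ℝ → ℝ} (hd : ∀ j, Continuous (d j))
    {N : ℝ → Matrix n n ℂ} {N' H : Matrix n n ℂ} {v : ℝ → EuclideanSpace ℂ n} {t : ℝ}
    (hN : ∀ i j, HasDerivAt (fun s => N s i j) (N' i j) t)
    (hNH : N t * H = diagonal (fun j => (d j t : ℂ)) * N t)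
    (hv : HasDerivAt v ((Complex.I * ρ) • toEuclideanCLM (𝕜 := ℂ) H (v t)) t) :
    HasDerivAt (fun s => toEuclideanCLM (𝕜 := ℂ) (phaseDiag (-ρ) d s * N s) (v s))
      (toEuclideanCLM (𝕜 := ℂ) (phaseDiag (-ρ) d t * N') (v t)) t := by
  have hderiv := hasDerivAt_toEuclideanCLM_apply (hasDerivAt_phaseDiag_apply (-ρ) hd t)
    (hasDerivAt_toEuclideanCLM_apply hN hv)
  set D := diagonal fun j => (d j t : ℂ)
  set Ψ := phaseDiag (-ρ) d t
  have hDΨ : D * Ψ = Ψ * D := by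
    simp only [D, Ψ, phaseDiag, diagonal_mul_diagonal, mul_comm]
  have key : (Complex.I * (-ρ : ℝ)) • D * Ψ * N t + Ψ * N' + (Complex.I * ρ) • (Ψ * (N t * H))
      = Ψ * N' := by
    rw [hNH, ← mul_assoc Ψ, ← hDΨ, Complex.ofReal_neg, mul_neg, neg_smul]
    simp only [neg_mul, smul_mul_assoc, mul_assoc]
    abel
  simp only [toEuclideanCLM_mul_apply]
  refine hderiv.congr_deriv ?_
  conv_rhs => rw [← toEuclideanCLM_mul_apply, ← key]
  simp only [map_add, map_smul, toEuclideanCLM_mul_apply, _root_.add_apply, _root_.smul_apply,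
    mul_assoc, add_assoc]

noncomputable def gaugeCoeff (ρ : ℝ) (d : n → ℝ → ℝ) (N N' : ℝ → Matrix n n ℂ) (t : ℝ) :
    Matrix n n ℂ :=
  (phaseDiag ρ d t)⁻¹ * N' t * (N t)⁻¹ * phaseDiag ρ d t

variable {ρ : ℝ} {d : n → ℝ → ℝ} {N N' : ℝ → Matrix n n ℂ}

theorem gaugeCoeff_mul {t : ℝ} (hN : (N t).det ≠ 0) :
    gaugeCoeff ρ d N N' t * (phaseDiag (-ρ) d t * N t) = phaseDiag (-ρ) d t * N' t := by
  rw [gaugeCoeff, inv_phaseDiag, mul_assoc, ← mul_assoc (phaseDiag ρ d t),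
    phaseDiag_mul_phaseDiag_neg, one_mul, mul_assoc, nonsing_inv_mul _ (isUnit_iff_ne_zero.2 hN),
    mul_one]

theorem norm_gaugeCoeff_le {t K : ℝ} (hK : ‖(N t)⁻¹‖ ≤ K) :
    ‖gaugeCoeff ρ d N N' t‖ ≤ K * ‖N' t‖ := by
  have hK0 : 0 ≤ K := (norm_nonneg _).trans hK
  rw [gaugeCoeff, inv_phaseDiag]
  calc _ ≤ ‖phaseDiag (-ρ) d t‖ * ‖N' t‖ * ‖(N t)⁻¹‖ * ‖phaseDiag ρ d t‖ :=
        norm_mul_le_of_le norm_mul₃_le le_rfl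
    _ ≤ 1 * ‖N' t‖ * K * 1 := by
      gcongr
      exacts [norm_phaseDiag_le_one _ d t, norm_phaseDiag_le_one _ d t]
    _ = K * ‖N' t‖ := by ring

theorem continuous_gaugeCoeff (hd : ∀ j, Continuous (d j))
    (hN : ∀ t i j, HasDerivAt (fun s => N s i j) (N' t i j) t) (hN' : Continuous N')
    (hdet : ∀ t, (N t).det ≠ 0) : Continuous (gaugeCoeff ρ d N N') := by
  have hNinv : Continuous fun t => (N t)⁻¹ := continuous_iff_continuousAt.2 fun t =>
    (continuousAt_matrix_inv_of_det_ne_zero (hdet t)).comp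
      (continuous_of_hasDerivAt_apply hN).continuousAt
  refine ((((continuous_phaseDiag (-ρ) hd).matrix_mul hN').matrix_mul hNinv).matrix_mul
    (continuous_phaseDiag ρ hd)).congr fun t => ?_
  rw [gaugeCoeff, inv_phaseDiag]

theorem integrable_norm_gaugeCoeff (hd : ∀ j, Continuous (d j))
    (hN : ∀ t i j, HasDerivAt (fun s => N s i j) (N' t i j) t) (hN' : Continuous N')
    {ε B : ℝ} (hε : 0 < ε) (hdet : ∀ t, ε ≤ ‖(N t).det‖) (hB : ∀ t, ‖N t‖ ≤ B)
    (hN'i : Integrable fun t => ‖N' t‖) : Integrable fun t => ‖gaugeCoeff ρ d N N' t‖ := by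
  obtain ⟨K, hK⟩ := exists_norm_inv_le_of_norm_le_of_le_norm_det (n := n) (𝕜 := ℂ) B hε
  have hcont := continuous_gaugeCoeff (ρ := ρ) hd hN hN' fun t =>
    norm_pos_iff.1 (hε.trans_le (hdet t))
  refine (hN'i.const_mul K).mono' hcont.norm.aestronglyMeasurable (ae_of_all _ fun t => ?_)
  rw [norm_norm]
  exact norm_gaugeCoeff_le (hK _ (hB t) (hdet t))

end PhaseDiag

theorem matOpNorm_eq_norm {m : ℕ} (A : Matrix (Fin m) (Fin m) ℂ) : matOpNorm A = ‖A‖ := rfl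

theorem matAct_eq_toEuclideanCLM {m : ℕ} (A : Matrix (Fin m) (Fin m) ℂ)
    (v : EuclideanSpace ℂ (Fin m)) : matAct A v = toEuclideanCLM (𝕜 := ℂ) A v := rfl

theorem asymptotic_integration_general
    (m : ℕ) (ρ : ℝ)
    (d : Fin m → ℝ → ℝ) (hd : ∀ j, Continuous (d j))
    (Φ : ℝ → Matrix (Fin m) (Fin m) ℂ)
    (hΦ : ∀ t, Φ t = Matrix.diagonal fun j =>
      Complex.exp (Complex.I * (ρ : ℂ) * ((∫ s in (0:ℝ)..t, d j s : ℝ) : ℂ)))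
    (H : ℝ → Matrix (Fin m) (Fin m) ℝ)
    (N N' : ℝ → Matrix (Fin m) (Fin m) ℂ)
    (hN : ∀ (t : ℝ) (i j : Fin m), HasDerivAt (fun s => N s i j) (N' t i j) t)
    (hN'cont : Continuous N')
    (hNH : ∀ t, N t * (H t).map (Complex.ofReal) =
      (Matrix.diagonal fun j => ((d j t : ℝ) : ℂ)) * N t)
    (ε₀ : ℝ) (hε₀ : 0 < ε₀) (hdet : ∀ t, ε₀ ≤ ‖(N t).det‖)
    (B : ℝ) (hB : ∀ t, matOpNorm (N t) ≤ B)
    (hN'int : Integrable (fun t => matOpNorm (N' t)))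
    (C : ℝ → Matrix (Fin m) (Fin m) ℂ)
    (hC : ∀ t, C t = (Φ t)⁻¹ * N' t * (N t)⁻¹ * Φ t) :
    Integrable (fun t => matOpNorm (C t)) ∧
    ∀ v : ℝ → EuclideanSpace ℂ (Fin m),
      (∀ t : ℝ, HasDerivAt v
        ((Complex.I * (ρ : ℂ)) • matAct ((H t).map (Complex.ofReal)) (v t)) t) →
      ∃ (αp αm : EuclideanSpace ℂ (Fin m)) (εp εm : ℝ → EuclideanSpace ℂ (Fin m)),
        (∀ t : ℝ, 0 < t → v t = matAct ((N t)⁻¹ * Φ t) (αp + εp t)) ∧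
        (∀ t : ℝ, t < 0 → v t = matAct ((N t)⁻¹ * Φ t) (αm + εm t)) ∧
        Filter.Tendsto εp Filter.atTop (nhds 0) ∧
        Filter.Tendsto εm Filter.atBot (nhds 0) ∧
        (∀ t : ℝ, HasDerivAt εp (matAct (C t) (αp + εp t)) t) ∧
        (∀ t : ℝ, HasDerivAt εm (matAct (C t) (αm + εm t)) t) := by
  obtain rfl : Φ = phaseDiag ρ d := funext hΦ
  obtain rfl : C = gaugeCoeff ρ d N N' := funext hC
  simp only [matOpNorm_eq_norm, matAct_eq_toEuclideanCLM] at *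
  have hdet0 : ∀ t, (N t).det ≠ 0 := fun t => norm_pos_iff.1 (hε₀.trans_le (hdet t))
  have hCint := integrable_norm_gaugeCoeff (ρ := ρ) hd hN hN'cont hε₀ hdet hB hN'int
  refine ⟨hCint, fun v hv => ?_⟩
  set w := fun t => toEuclideanCLM (𝕜 := ℂ) (phaseDiag (-ρ) d t * N t) (v t)
  have hv_eq : ∀ t, v t = toEuclideanCLM (𝕜 := ℂ) ((N t)⁻¹ * phaseDiag ρ d t) (w t) := fun t => by
    rw [← toEuclideanCLM_mul_apply, mul_assoc, ← mul_assoc (phaseDiag ρ d t),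
      phaseDiag_mul_phaseDiag_neg, one_mul, nonsing_inv_mul _ (isUnit_iff_ne_zero.2 (hdet0 t)),
      map_one, one_apply_eq_self]
  have hw : ∀ t, HasDerivAt w (toEuclideanCLM (𝕜 := ℂ) (gaugeCoeff ρ d N N' t) (w t)) t :=
    fun t => by
      rw [← toEuclideanCLM_mul_apply, gaugeCoeff_mul (hdet0 t)]
      exact hasDerivAt_phaseDiag_neg_mul_apply hd (hN t) (hNH t) (hv t)
  obtain ⟨htop, hbot⟩ := tendsto_limUnder_of_norm_deriv_le_mul_norm
    (continuous_gaugeCoeff hd hN hN'cont hdet0).norm (fun t => norm_nonneg _) hCint hw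
    fun t => (toEuclideanCLM (𝕜 := ℂ) (gaugeCoeff ρ d N N' t)).le_opNorm (w t)
  refine ⟨limUnder atTop w, limUnder atBot w, fun t => w t - limUnder atTop w,
    fun t => w t - limUnder atBot w, fun t _ => ?_, fun t _ => ?_, ?_, ?_, fun t => ?_,
    fun t => ?_⟩
  · simpa only [add_sub_cancel] using hv_eq t
  · simpa only [add_sub_cancel] using hv_eq t
  · simpa only [sub_self] using htop.sub_const (limUnder atTop w)
  · simpa only [sub_self] using hbot.sub_const (limUnder atBot w)
  · simpa only [add_sub_cancel] using (hw t).sub_const (limUnder atTop w)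
  · simpa only [add_sub_cancel] using (hw t).sub_const (limUnder atBot w)

/-- Asymptotic integration (Proposition 2.3): with `D(t)` the diagonal
matrix of the continuous functions `d j`, `Φ(t)` the diagonal oscillatory fundamental
matrix, `N` a uniform diagonalizer of the continuous real family `H` with `‖N'‖`
integrable, and `C(t) = Φ(t)⁻¹ N'(t) N(t)⁻¹ Φ(t)`, the function `t ↦ ‖C(t)‖` is
integrable, and every solution of `v' = i ρ H v` is of the form
`v(t) = N(t)⁻¹ Φ(t) (α_± + ε_±(t))` for `t ≷ 0` with `ε_±(t) → 0` as `t → ±∞` and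
`ε_±' = C (α_± + ε_±)`. -/
theorem asymptotic_integration
    (m : ℕ) (hm : 1 ≤ m) (ρ : ℝ) (hρ : 0 < ρ)
    (d : Fin m → ℝ → ℝ) (hd : ∀ j, Continuous (d j))
    (Φ : ℝ → Matrix (Fin m) (Fin m) ℂ)
    (hΦ : ∀ t, Φ t = Matrix.diagonal fun j =>
      Complex.exp (Complex.I * (ρ : ℂ) * ((∫ s in (0:ℝ)..t, d j s : ℝ) : ℂ)))
    (H : ℝ → Matrix (Fin m) (Fin m) ℝ) (hH : Continuous H)
    (N N' : ℝ → Matrix (Fin m) (Fin m) ℂ)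
    (hN : ∀ (t : ℝ) (i j : Fin m), HasDerivAt (fun s => N s i j) (N' t i j) t)
    (hN'cont : Continuous N')
    (hNH : ∀ t, N t * (H t).map (Complex.ofReal) =
      (Matrix.diagonal fun j => ((d j t : ℝ) : ℂ)) * N t)
    (ε₀ : ℝ) (hε₀ : 0 < ε₀) (hdet : ∀ t, ε₀ ≤ ‖(N t).det‖)
    (B : ℝ) (hB : ∀ t, matOpNorm (N t) ≤ B)
    (hN'int : Integrable (fun t => matOpNorm (N' t)))
    (C : ℝ → Matrix (Fin m) (Fin m) ℂ)
    (hC : ∀ t, C t = (Φ t)⁻¹ * N' t * (N t)⁻¹ * Φ t) :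
    Integrable (fun t => matOpNorm (C t)) ∧
    ∀ v : ℝ → EuclideanSpace ℂ (Fin m),
      (∀ t : ℝ, HasDerivAt v
        ((Complex.I * (ρ : ℂ)) • matAct ((H t).map (Complex.ofReal)) (v t)) t) →
      ∃ (αp αm : EuclideanSpace ℂ (Fin m)) (εp εm : ℝ → EuclideanSpace ℂ (Fin m)),
        (∀ t : ℝ, 0 < t → v t = matAct ((N t)⁻¹ * Φ t) (αp + εp t)) ∧
        (∀ t : ℝ, t < 0 → v t = matAct ((N t)⁻¹ * Φ t) (αm + εm t)) ∧
        Filter.Tendsto εp Filter.atTop (nhds 0) ∧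
        Filter.Tendsto εm Filter.atBot (nhds 0) ∧
        (∀ t : ℝ, HasDerivAt εp (matAct (C t) (αp + εp t)) t) ∧
        (∀ t : ℝ, HasDerivAt εm (matAct (C t) (αm + εm t)) t) :=
  asymptotic_integration_general m ρ d hd Φ hΦ H N N' hN hN'cont hNH ε₀ hε₀ hdet B hB hN'int C hC
end

section
/- Let n ≥ 1 and let φ : ℝ × (ℝⁿ∖{0}) → ℝ be such that φ(s,·) is smooth and positively homogeneous of degree 1 for each s ∈ ℝ, φ(·,ξ) is continuous for each ξ ≠ 0, and for every multi-index μ there is a constant c_μ with |∂_ξ^μ φ(s,ξ)| ≤ c_μ |ξ|^{1-|μ|} for all s ∈ ℝ and ξ ≠ 0. Define θ(t,ξ) = ∫_0^t φ(s,ξ) ds. Then for every multi-index μ with |μ| ≥ 1 there exists a constant c such that for all t ∈ ℝ: |∂_ξ^μ e^{iθ(t,ξ)}| ≤ c (1+|t|)^{|μ|} whenever |ξ| ≥ 1, and |∂_ξ^μ e^{iθ(t,ξ)}| ≤ c (1+|t|)^{|μ|} |ξ|^{1-|μ|} whenever 0 < |ξ| < 1. -/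
open MeasureTheory Filter Set Metric Topology

set_option maxHeartbeats 1600000
set_option synthInstance.maxHeartbeats 400000



theorem aux_hasFDerivAt_itf
    {n : ℕ} {f : EuclideanSpace ℝ (Fin n) → ℝ}
    (hf : ContDiffOn ℝ (⊤ : ℕ∞) f {ξ : EuclideanSpace ℝ (Fin n) | ξ ≠ 0})
    (i : ℕ) {ξ : EuclideanSpace ℝ (Fin n)} (hξ : ξ ≠ 0) :
    HasFDerivAt (iteratedFDeriv ℝ i f)
      ((continuousMultilinearCurryLeftEquiv ℝ
          (fun _ : Fin (i+1) => EuclideanSpace ℝ (Fin n)) ℝ)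
        (iteratedFDeriv ℝ (i+1) f ξ)) ξ := by
  have hopen : IsOpen {ξ : EuclideanSpace ℝ (Fin n) | ξ ≠ 0} := isOpen_ne
  have hu : {ξ : EuclideanSpace ℝ (Fin n) | ξ ≠ 0} ∈ 𝓝 ξ := hopen.mem_nhds hξ
  have hd : DifferentiableOn ℝ
      (iteratedFDerivWithin ℝ i f {ξ : EuclideanSpace ℝ (Fin n) | ξ ≠ 0})
      {ξ : EuclideanSpace ℝ (Fin n) | ξ ≠ 0} :=
    hf.differentiableOn_iteratedFDerivWithin (by exact_mod_cast ENat.coe_lt_top i) hopen.uniqueDiffOn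
  have heq : iteratedFDerivWithin ℝ i f {ξ : EuclideanSpace ℝ (Fin n) | ξ ≠ 0}
      =ᶠ[𝓝 ξ] iteratedFDeriv ℝ i f :=
    Filter.eventuallyEq_of_mem hu (iteratedFDerivWithin_of_isOpen i hopen)
  have hdiff : DifferentiableAt ℝ (iteratedFDeriv ℝ i f) ξ :=
    (heq.differentiableAt_iff).1 ((hd ξ hξ).differentiableAt hu)
  have h2 : (continuousMultilinearCurryLeftEquiv ℝ
        (fun _ : Fin (i+1) => EuclideanSpace ℝ (Fin n)) ℝ)
      (iteratedFDeriv ℝ (i+1) f ξ) = fderiv ℝ (iteratedFDeriv ℝ i f) ξ := by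
    rw [iteratedFDeriv_succ_eq_comp_left]; simp
  rw [h2]
  exact hdiff.hasFDerivAt

theorem aux_sm
    {n : ℕ} {φ : ℝ → EuclideanSpace ℝ (Fin n) → ℝ}
    (hφsmooth : ∀ s : ℝ, ContDiffOn ℝ (⊤ : ℕ∞) (φ s) {ξ : EuclideanSpace ℝ (Fin n) | ξ ≠ 0})
    (hφcont : ∀ ξ : EuclideanSpace ℝ (Fin n), ξ ≠ 0 → Continuous fun s => φ s ξ) :
    ∀ (i : ℕ) (ξ : EuclideanSpace ℝ (Fin n)), ξ ≠ 0 →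
      StronglyMeasurable (fun s => iteratedFDeriv ℝ i (φ s) ξ) := by
  intro i
  induction i with
  | zero =>
    intro ξ hξ
    have h : (fun s => iteratedFDeriv ℝ 0 (φ s) ξ)
        = fun s => (continuousMultilinearCurryFin0 ℝ (EuclideanSpace ℝ (Fin n)) ℝ).symm
            (φ s ξ) := by
      funext s; rw [iteratedFDeriv_zero_eq_comp]; rfl
    rw [h]
    exact ((continuousMultilinearCurryFin0 ℝ (EuclideanSpace ℝ (Fin n)) ℝ).symm.continuous.comp
      (hφcont ξ hξ)).stronglyMeasurable
  | succ i IH =>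
    intro ξ hξ
    set e := continuousMultilinearCurryLeftEquiv ℝ
      (fun _ : Fin (i+1) => EuclideanSpace ℝ (Fin n)) ℝ with he
    have hder : ∀ s : ℝ, HasFDerivAt (iteratedFDeriv ℝ i (φ s))
        (e (iteratedFDeriv ℝ (i+1) (φ s) ξ)) ξ := fun s =>
      aux_hasFDerivAt_itf (hφsmooth s) i hξ
    have hξn : 0 < ‖ξ‖ := norm_pos_iff.2 hξ
    have hδ : 0 < ‖ξ‖ / 2 := by linarith
    set v : Fin n → EuclideanSpace ℝ (Fin n) := fun j => EuclideanSpace.single j (1:ℝ) with hv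
    set r : ℕ → ℝ := fun m => (‖ξ‖/2) / (m+1) with hr
    have hr_pos : ∀ m, 0 < r m := fun m => div_pos hδ (by positivity)
    have hr_le : ∀ m, r m ≤ ‖ξ‖/2 := by
      intro m
      apply div_le_self hδ.le
      have : (0:ℝ) ≤ (m:ℝ) := Nat.cast_nonneg m
      linarith
    have hvnorm : ∀ j, ‖v j‖ = 1 := by
      intro j; rw [hv]; rw [EuclideanSpace.norm_single]; exact norm_one
    have hpt : ∀ (m : ℕ) (j : Fin n), ξ + r m • v j ≠ 0 := by
      intro m j h
      have hx : ξ = -(r m • v j) := eq_neg_of_add_eq_zero_left h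
      have hn2 : ‖ξ‖ = r m := by
        rw [hx, norm_neg, norm_smul, hvnorm j, mul_one, Real.norm_eq_abs,
          abs_of_pos (hr_pos m)]
      linarith [hr_le m]
    have hr_t : Tendsto r atTop (𝓝[≠] (0:ℝ)) := by
      apply tendsto_nhdsWithin_of_tendsto_nhds_of_eventually_within
      · have h1 := tendsto_one_div_add_atTop_nhds_zero_nat (𝕜 := ℝ)
        have h2 : Tendsto (fun m : ℕ => (‖ξ‖/2) * (1 / ((m:ℝ)+1))) atTop
            (𝓝 ((‖ξ‖/2) * 0)) := h1.const_mul _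
        rw [mul_zero] at h2
        refine h2.congr fun m => ?_
        rw [hr]; ring
      · exact Eventually.of_forall fun m => (hr_pos m).ne'
    have key : ∀ (s : ℝ) (j : Fin n),
        Tendsto (fun m => (r m)⁻¹ •
            (iteratedFDeriv ℝ i (φ s) (ξ + r m • v j) - iteratedFDeriv ℝ i (φ s) ξ)) atTop
          (𝓝 ((e (iteratedFDeriv ℝ (i+1) (φ s) ξ)) (v j))) := by
      intro s j
      have hc : HasDerivAt (fun ρ : ℝ => ξ + ρ • v j) (v j) 0 := by
        simpa using ((hasDerivAt_id (0:ℝ)).smul_const (v j)).const_add ξ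
      have h0 : ξ + (0:ℝ) • v j = ξ := by simp
      have hF : HasFDerivAt (iteratedFDeriv ℝ i (φ s))
          (e (iteratedFDeriv ℝ (i+1) (φ s) ξ)) ((fun ρ : ℝ => ξ + ρ • v j) 0) := by
        simpa [h0] using hder s
      have hline : HasDerivAt (fun ρ : ℝ => iteratedFDeriv ℝ i (φ s) (ξ + ρ • v j))
          ((e (iteratedFDeriv ℝ (i+1) (φ s) ξ)) (v j)) 0 := hF.comp_hasDerivAt 0 hc
      rw [hasDerivAt_iff_tendsto_slope] at hline
      have comp := hline.comp hr_t
      refine comp.congr fun m => ?_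
      simp only [Function.comp_apply, slope_def_module, sub_zero, h0]
    have hSMapp : ∀ j : Fin n, StronglyMeasurable
        (fun s => (e (iteratedFDeriv ℝ (i+1) (φ s) ξ)) (v j)) := by
      intro j
      apply stronglyMeasurable_of_tendsto (f := fun m s => (r m)⁻¹ •
          (iteratedFDeriv ℝ i (φ s) (ξ + r m • v j) - iteratedFDeriv ℝ i (φ s) ξ)) atTop
      · intro m
        exact ((IH _ (hpt m j)).sub (IH ξ hξ)).const_smul ((r m)⁻¹)
      · rw [tendsto_pi_nhds]
        intro s
        exact key s j
    have hDrep : (fun s => e (iteratedFDeriv ℝ (i+1) (φ s) ξ))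
        = fun s => ∑ j : Fin n, (EuclideanSpace.proj j).smulRight
            ((e (iteratedFDeriv ℝ (i+1) (φ s) ξ)) (v j)) := by
      funext s
      apply ContinuousLinearMap.ext
      intro x
      have hx : ∑ j : Fin n, x j • v j = x := by
        have := (EuclideanSpace.basisFun (Fin n) ℝ).sum_repr x
        simpa [EuclideanSpace.basisFun_apply, EuclideanSpace.basisFun_repr, hv] using this
      rw [ContinuousLinearMap.sum_apply]
      simp only [ContinuousLinearMap.smulRight_apply]
      have hproj : ∀ j : Fin n, (EuclideanSpace.proj j) x = x j := fun j => rfl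
      simp_rw [hproj]
      conv_lhs => rw [← hx]
      rw [map_sum (e (iteratedFDeriv ℝ (i+1) (φ s) ξ)) (fun j => x j • v j) Finset.univ]
      simp_rw [ContinuousLinearMap.map_smul]
    have hD : StronglyMeasurable (fun s => e (iteratedFDeriv ℝ (i+1) (φ s) ξ)) := by
      rw [hDrep]
      apply Finset.stronglyMeasurable_fun_sum
      intro j _
      exact (ContinuousLinearMap.smulRightL ℝ (EuclideanSpace ℝ (Fin n)) _
        (EuclideanSpace.proj j)).continuous.comp_stronglyMeasurable (hSMapp j)
    have hfinal : (fun s => iteratedFDeriv ℝ (i+1) (φ s) ξ)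
        = fun s => e.symm (e (iteratedFDeriv ℝ (i+1) (φ s) ξ)) := by
      funext s; rw [LinearIsometryEquiv.symm_apply_apply]
    rw [hfinal]
    exact e.symm.continuous.comp_stronglyMeasurable hD


theorem aux_intInt {X : Type*} [NormedAddCommGroup X] {f : ℝ → X}
    (hf : StronglyMeasurable f) {C : ℝ} (hC : ∀ s, ‖f s‖ ≤ C) (a b : ℝ) :
    IntervalIntegrable f MeasureTheory.volume a b := by
  rw [intervalIntegrable_iff]
  refine Integrable.mono' (g := fun _ => C) ?_ hf.aestronglyMeasurable.restrict
    (Filter.Eventually.of_forall hC)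
  refine integrableOn_const ?_
  rw [Set.uIoc]
  exact measure_Ioc_lt_top.ne

-- anti-monotonicity of zpow with nonpositive exponent
theorem aux_zpow_anti {a b : ℝ} (ha : 0 < a) (hab : a ≤ b) (i : ℕ) :
    b ^ (-(i:ℤ)) ≤ a ^ (-(i:ℤ)) := by
  rw [zpow_neg, zpow_neg, zpow_natCast, zpow_natCast]
  have hb : 0 < a ^ i := pow_pos ha i
  exact inv_anti₀ hb (pow_le_pow_left₀ ha.le hab i)






theorem aux_step
    {n : ℕ} {φ : ℝ → EuclideanSpace ℝ (Fin n) → ℝ}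
    (hφsmooth : ∀ s : ℝ, ContDiffOn ℝ (⊤ : ℕ∞) (φ s) {ξ : EuclideanSpace ℝ (Fin n) | ξ ≠ 0})
    (hφcont : ∀ ξ : EuclideanSpace ℝ (Fin n), ξ ≠ 0 → Continuous fun s => φ s ξ)
    (t : ℝ) (i : ℕ) {ξ : EuclideanSpace ℝ (Fin n)} (hξ : ξ ≠ 0)
    (c1 c2 : ℝ) (hc2 : 0 ≤ c2)
    (hb1 : ∀ s : ℝ, ∀ η : EuclideanSpace ℝ (Fin n), η ≠ 0 →
      ‖iteratedFDeriv ℝ i (φ s) η‖ ≤ c1 * ‖η‖ ^ ((1 : ℤ) - i))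
    (hb2 : ∀ s : ℝ, ∀ η : EuclideanSpace ℝ (Fin n), η ≠ 0 →
      ‖iteratedFDeriv ℝ (i+1) (φ s) η‖ ≤ c2 * ‖η‖ ^ ((1 : ℤ) - (i+1))) :
    HasFDerivAt (fun η => ∫ s in (0:ℝ)..t, iteratedFDeriv ℝ i (φ s) η)
      (∫ s in (0:ℝ)..t,
        (continuousMultilinearCurryLeftEquiv ℝ
          (fun _ : Fin (i+1) => EuclideanSpace ℝ (Fin n)) ℝ)
        (iteratedFDeriv ℝ (i+1) (φ s) ξ)) ξ := by
  set e := continuousMultilinearCurryLeftEquiv ℝ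
      (fun _ : Fin (i+1) => EuclideanSpace ℝ (Fin n)) ℝ with he
  have hξn : 0 < ‖ξ‖ := norm_pos_iff.2 hξ
  have hδ : 0 < ‖ξ‖ / 2 := by linarith
  have hball : ∀ η ∈ ball ξ (‖ξ‖/2), ‖ξ‖/2 ≤ ‖η‖ := by
    intro η hη
    have h1 : ‖ξ - η‖ < ‖ξ‖/2 := by
      rw [mem_ball, dist_comm, dist_eq_norm] at hη
      exact hη
    have h2 := norm_sub_norm_le ξ η
    linarith
  have hball0 : ∀ η ∈ ball ξ (‖ξ‖/2), η ≠ 0 := by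
    intro η hη h0
    have := hball η hη
    rw [h0, norm_zero] at this
    linarith
  have hexp : ((1 : ℤ) - (i+1:ℕ)) = -(i:ℤ) := by push_cast; ring
  apply intervalIntegral.hasFDerivAt_integral_of_dominated_of_fderiv_le
    (F' := fun η s => e (iteratedFDeriv ℝ (i+1) (φ s) η))
    (bound := fun _ => c2 * (‖ξ‖/2) ^ (-(i:ℤ))) (s := ball ξ (‖ξ‖/2)) (ball_mem_nhds ξ hδ)
  · refine Filter.eventually_of_mem
      ((isOpen_ne : IsOpen {η : EuclideanSpace ℝ (Fin n) | η ≠ 0}).mem_nhds hξ)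
      (fun η hη => ?_)
    exact (aux_sm hφsmooth hφcont i η hη).aestronglyMeasurable.restrict
  · exact aux_intInt (aux_sm hφsmooth hφcont i ξ hξ) (fun s => hb1 s ξ hξ) 0 t
  · exact (e.continuous.comp_stronglyMeasurable
      (aux_sm hφsmooth hφcont (i+1) ξ hξ)).aestronglyMeasurable.restrict
  · refine Filter.Eventually.of_forall (fun s _ η hη => ?_)
    rw [LinearIsometryEquiv.norm_map]
    calc ‖iteratedFDeriv ℝ (i+1) (φ s) η‖
        ≤ c2 * ‖η‖ ^ ((1 : ℤ) - (i+1:ℕ)) := hb2 s η (hball0 η hη)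
      _ ≤ c2 * (‖ξ‖/2) ^ (-(i:ℤ)) := by
          rw [hexp]
          exact mul_le_mul_of_nonneg_left (aux_zpow_anti hδ (hball η hη) i) hc2
  · exact intervalIntegrable_const
  · refine Filter.Eventually.of_forall (fun s _ η hη => ?_)
    exact aux_hasFDerivAt_itf (hφsmooth s) i (hball0 η hη)



theorem aux_lie_interval {X Y : Type*} [NormedAddCommGroup X] [NormedSpace ℝ X]
    [NormedAddCommGroup Y] [NormedSpace ℝ Y] [CompleteSpace X] [CompleteSpace Y]
    (L : X ≃ₗᵢ[ℝ] Y) (f : ℝ → X) (a b : ℝ) :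
    (∫ s in a..b, L (f s)) = L (∫ s in a..b, f s) := by
  have h1 : (∫ s in Set.uIoc a b, L (f s)) = L (∫ s in Set.uIoc a b, f s) :=
    L.toLinearIsometry.integral_comp_comm f
  rw [intervalIntegral.intervalIntegral_eq_integral_uIoc,
    intervalIntegral.intervalIntegral_eq_integral_uIoc, h1, _root_.map_smul]



theorem aux_c_nonneg {n k : ℕ} (hn : 1 ≤ n) {φ : ℝ → EuclideanSpace ℝ (Fin n) → ℝ} {c : ℝ}
    (h : ∀ s : ℝ, ∀ ξ : EuclideanSpace ℝ (Fin n), ξ ≠ 0 →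
      ‖iteratedFDeriv ℝ k (φ s) ξ‖ ≤ c * ‖ξ‖ ^ ((1 : ℤ) - k)) : 0 ≤ c := by
  set ξ0 : EuclideanSpace ℝ (Fin n) := EuclideanSpace.single (⟨0, hn⟩ : Fin n) (1:ℝ) with hξ0
  have hnorm : ‖ξ0‖ = 1 := by rw [hξ0, EuclideanSpace.norm_single]; exact norm_one
  have hne : ξ0 ≠ 0 := by
    intro h0; rw [h0, norm_zero] at hnorm; norm_num at hnorm
  have := h 0 ξ0 hne
  rw [hnorm, one_zpow, mul_one] at this
  exact le_trans (norm_nonneg _) this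

theorem aux_formula
    {n : ℕ} (hn : 1 ≤ n) {φ : ℝ → EuclideanSpace ℝ (Fin n) → ℝ}
    (hφsmooth : ∀ s : ℝ, ContDiffOn ℝ (⊤ : ℕ∞) (φ s) {ξ : EuclideanSpace ℝ (Fin n) | ξ ≠ 0})
    (hφcont : ∀ ξ : EuclideanSpace ℝ (Fin n), ξ ≠ 0 → Continuous fun s => φ s ξ)
    (hφbd : ∀ k : ℕ, ∃ c : ℝ, ∀ s : ℝ, ∀ ξ : EuclideanSpace ℝ (Fin n), ξ ≠ 0 →
      ‖iteratedFDeriv ℝ k (φ s) ξ‖ ≤ c * ‖ξ‖ ^ ((1 : ℤ) - k))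
    (t : ℝ) :
    ∀ (i : ℕ) (ξ : EuclideanSpace ℝ (Fin n)), ξ ≠ 0 →
      iteratedFDeriv ℝ i (fun η => ∫ s in (0:ℝ)..t, φ s η) ξ
        = ∫ s in (0:ℝ)..t, iteratedFDeriv ℝ i (φ s) ξ := by
  intro i
  induction i with
  | zero =>
    intro ξ hξ
    have hint : IntervalIntegrable (fun s => φ s ξ) volume 0 t :=
      (hφcont ξ hξ).intervalIntegrable 0 t
    set L : ℝ →L[ℝ] ContinuousMultilinearMap ℝ (fun _ : Fin 0 => EuclideanSpace ℝ (Fin n)) ℝ :=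
      (continuousMultilinearCurryFin0 ℝ (EuclideanSpace ℝ (Fin n)) ℝ).symm.toContinuousLinearEquiv.toContinuousLinearMap with hL
    have h0 : ∀ s : ℝ, iteratedFDeriv ℝ 0 (φ s) ξ = L (φ s ξ) := fun s => by
      rw [iteratedFDeriv_zero_eq_comp]; rfl
    have hR : (∫ s in (0:ℝ)..t, iteratedFDeriv ℝ 0 (φ s) ξ)
        = ∫ s in (0:ℝ)..t, L (φ s ξ) := by
      apply intervalIntegral.integral_congr
      intro s _; exact h0 s
    rw [hR, L.intervalIntegral_comp_comm hint, iteratedFDeriv_zero_eq_comp]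
    rfl
  | succ i IH =>
    intro ξ hξ
    obtain ⟨c1, hc1⟩ := hφbd i
    obtain ⟨c2, hc2⟩ := hφbd (i+1)
    set e := continuousMultilinearCurryLeftEquiv ℝ
        (fun _ : Fin (i+1) => EuclideanSpace ℝ (Fin n)) ℝ with he
    have hstep := aux_step hφsmooth hφcont t i hξ c1 c2 (aux_c_nonneg hn hc2) hc1 hc2
    have hmem := (isOpen_ne : IsOpen {η : EuclideanSpace ℝ (Fin n) | η ≠ 0}).mem_nhds hξ
    have heq : iteratedFDeriv ℝ i (fun η => ∫ s in (0:ℝ)..t, φ s η)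
        =ᶠ[𝓝 ξ] (fun η => ∫ s in (0:ℝ)..t, iteratedFDeriv ℝ i (φ s) η) :=
      Filter.eventually_of_mem hmem (fun η hη => IH η hη)
    have hF : HasFDerivAt (iteratedFDeriv ℝ i (fun η => ∫ s in (0:ℝ)..t, φ s η))
        (∫ s in (0:ℝ)..t, e (iteratedFDeriv ℝ (i+1) (φ s) ξ)) ξ :=
      hstep.congr_of_eventuallyEq heq
    have h1 : iteratedFDeriv ℝ (i+1) (fun η => ∫ s in (0:ℝ)..t, φ s η) ξ
        = e.symm (fderiv ℝ (iteratedFDeriv ℝ i (fun η => ∫ s in (0:ℝ)..t, φ s η)) ξ) := by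
      rw [iteratedFDeriv_succ_eq_comp_left]; rfl
    rw [h1, hF.fderiv]
    have hsm2 : StronglyMeasurable (fun s => e (iteratedFDeriv ℝ (i+1) (φ s) ξ)) :=
      e.continuous.comp_stronglyMeasurable (aux_sm hφsmooth hφcont (i+1) ξ hξ)
    have hbd2 : ∀ s : ℝ, ‖e (iteratedFDeriv ℝ (i+1) (φ s) ξ)‖
        ≤ c2 * ‖ξ‖ ^ ((1:ℤ) - (i+1:ℕ)) := by
      intro s
      rw [LinearIsometryEquiv.norm_map]
      exact hc2 s ξ hξ
    have hint2 :=
      @aux_intInt _ ContinuousLinearMap.toNormedAddCommGroup _ hsm2 _ hbd2 0 t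
    rw [← aux_lie_interval e.symm (fun s => e (iteratedFDeriv ℝ (i+1) (φ s) ξ)) 0 t]
    apply intervalIntegral.integral_congr
    intro s _
    show e.symm (e (iteratedFDeriv ℝ (i+1) (φ s) ξ)) = iteratedFDeriv ℝ (i+1) (φ s) ξ
    rw [LinearIsometryEquiv.symm_apply_apply]

theorem aux_exp_norm (i : ℕ) (x : ℝ) :
    ‖iteratedFDeriv ℝ i (fun y : ℝ => Complex.exp (Complex.I * y)) x‖ = 1 := by
  have h : ∀ (j : ℕ) (y : ℝ), iteratedDeriv j (fun y : ℝ => Complex.exp (Complex.I * y)) y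
      = Complex.I ^ j * Complex.exp (Complex.I * y) := by
    intro j
    induction j with
    | zero => intro y; simp
    | succ j IHj =>
      intro y
      rw [iteratedDeriv_succ]
      have hfun : iteratedDeriv j (fun y : ℝ => Complex.exp (Complex.I * y))
          = fun y : ℝ => Complex.I ^ j * Complex.exp (Complex.I * y) := funext IHj
      rw [hfun]
      have hd : HasDerivAt (fun y : ℝ => Complex.exp (Complex.I * y))
          (Complex.exp (Complex.I * y) * Complex.I) y := by
        have h1 : HasDerivAt (fun y : ℝ => (Complex.I * y : ℂ)) Complex.I y := by
          simpa using (Complex.ofRealCLM.hasDerivAt (x := y)).const_mul Complex.I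
        exact h1.cexp
      rw [(hd.const_mul (Complex.I ^ j)).deriv]
      ring
  rw [norm_iteratedFDeriv_eq_norm_iteratedDeriv, h i x]
  rw [norm_mul, norm_pow, Complex.norm_I, one_pow, one_mul,
    Complex.norm_exp]
  simp [Complex.mul_re]


/-- Derivative bounds for the oscillatory exponential of the phase
`θ(t, ξ) = ∫_0^t φ(s, ξ) ds` (estimate (theta) of the paper): if `φ(s, ·)` is smooth and
positively homogeneous of degree one away from `0`, continuous in `s`, with
`‖D^k_ξ φ(s, ξ)‖ ≤ c_k ‖ξ‖^(1-k)` uniformly in `s`, then for every `k ≥ 1` there is a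
constant `c` with `‖D^k_ξ e^{iθ(t,ξ)}‖ ≤ c (1+|t|)^k` for `‖ξ‖ ≥ 1` and
`‖D^k_ξ e^{iθ(t,ξ)}‖ ≤ c (1+|t|)^k ‖ξ‖^(1-k)` for `0 < ‖ξ‖ < 1`. -/
theorem deriv_bounds_exp_phase
    (n : ℕ) (hn : 1 ≤ n) (φ : ℝ → EuclideanSpace ℝ (Fin n) → ℝ)
    (hφsmooth : ∀ s : ℝ, ContDiffOn ℝ (⊤ : ℕ∞) (φ s) {ξ : EuclideanSpace ℝ (Fin n) | ξ ≠ 0})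
    (hφhom : ∀ s : ℝ, ∀ lam : ℝ, 0 < lam → ∀ ξ : EuclideanSpace ℝ (Fin n), ξ ≠ 0 →
      φ s (lam • ξ) = lam * φ s ξ)
    (hφcont : ∀ ξ : EuclideanSpace ℝ (Fin n), ξ ≠ 0 → Continuous fun s => φ s ξ)
    (hφbd : ∀ k : ℕ, ∃ c : ℝ, ∀ s : ℝ, ∀ ξ : EuclideanSpace ℝ (Fin n), ξ ≠ 0 →
      ‖iteratedFDeriv ℝ k (φ s) ξ‖ ≤ c * ‖ξ‖ ^ ((1 : ℤ) - k)) :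
    ∀ k : ℕ, 1 ≤ k → ∃ c : ℝ, ∀ t : ℝ, ∀ ξ : EuclideanSpace ℝ (Fin n),
      (1 ≤ ‖ξ‖ →
        ‖iteratedFDeriv ℝ k
          (fun η => Complex.exp (Complex.I * ((∫ s in (0:ℝ)..t, φ s η : ℝ) : ℂ))) ξ‖
          ≤ c * (1 + |t|) ^ k) ∧
      (ξ ≠ 0 → ‖ξ‖ < 1 →
        ‖iteratedFDeriv ℝ k
          (fun η => Complex.exp (Complex.I * ((∫ s in (0:ℝ)..t, φ s η : ℝ) : ℂ))) ξ‖
          ≤ c * (1 + |t|) ^ k * ‖ξ‖ ^ ((1 : ℤ) - k)) := by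
  intro k hk
  choose c hc using hφbd
  have hc0 : ∀ i, 0 ≤ c i := fun i => aux_c_nonneg hn (hc i)
  set M : ℝ := 1 + ∑ i ∈ Finset.range (k+1), c i with hM
  have hsum0 : 0 ≤ ∑ i ∈ Finset.range (k+1), c i := Finset.sum_nonneg fun i _ => hc0 i
  have hM1 : 1 ≤ M := by rw [hM]; linarith
  have hM0 : 0 ≤ M := by linarith
  have hMc : ∀ i, i ≤ k → c i ≤ M := by
    intro i hi
    have h1 : c i ≤ ∑ j ∈ Finset.range (k+1), c j :=
      Finset.single_le_sum (f := c) (fun j _ => hc0 j) (Finset.mem_range.2 (by omega))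
    rw [hM]; linarith
  clear_value M
  refine ⟨(k.factorial : ℝ) * M ^ k, ?_⟩
  intro t ξ
  set ψ : EuclideanSpace ℝ (Fin n) → ℝ := fun η => ∫ s in (0:ℝ)..t, φ s η with hψ
  have huo : IsOpen {η : EuclideanSpace ℝ (Fin n) | η ≠ 0} := isOpen_ne
  set g : ℝ → ℂ := fun y => Complex.exp (Complex.I * y) with hg
  have hfun : (fun η => Complex.exp (Complex.I * ((∫ s in (0:ℝ)..t, φ s η : ℝ) : ℂ)))
      = g ∘ ψ := rfl
  have hψbd : ∀ (i : ℕ) (η : EuclideanSpace ℝ (Fin n)), η ≠ 0 →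
      ‖iteratedFDeriv ℝ i ψ η‖ ≤ c i * ‖η‖ ^ ((1:ℤ) - i) * |t| := by
    intro i η hη
    rw [show iteratedFDeriv ℝ i ψ η = ∫ s in (0:ℝ)..t, iteratedFDeriv ℝ i (φ s) η from
      aux_formula hn hφsmooth hφcont (fun j => ⟨c j, hc j⟩) t i η hη]
    have h := intervalIntegral.norm_integral_le_of_norm_le_const
      (C := c i * ‖η‖ ^ ((1:ℤ)-i)) (f := fun s => iteratedFDeriv ℝ i (φ s) η) (a := 0) (b := t)
      (fun s _ => hc i s η hη)
    simpa [sub_zero] using h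
  have hdiffAt : ∀ (m : ℕ) (x : EuclideanSpace ℝ (Fin n)), x ≠ 0 →
      DifferentiableAt ℝ (iteratedFDeriv ℝ m ψ) x := by
    intro m x hx0
    have hstep := aux_step hφsmooth hφcont t m hx0 (c m) (c (m+1))
      (hc0 (m+1)) (hc m) (hc (m+1))
    have heq : iteratedFDeriv ℝ m ψ =ᶠ[𝓝 x]
        (fun η => ∫ s in (0:ℝ)..t, iteratedFDeriv ℝ m (φ s) η) :=
      Filter.eventually_of_mem (huo.mem_nhds hx0)
        (fun η hη => aux_formula hn hφsmooth hφcont (fun j => ⟨c j, hc j⟩) t m η hη)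
    exact (hstep.congr_of_eventuallyEq heq).differentiableAt
  have hCD : ContDiffOn ℝ (k : ℕ∞) ψ {η : EuclideanSpace ℝ (Fin n) | η ≠ 0} := by
    apply contDiffOn_of_differentiableOn
    intro m _
    have hglob : DifferentiableOn ℝ (iteratedFDeriv ℝ m ψ)
        {η : EuclideanSpace ℝ (Fin n) | η ≠ 0} :=
      fun x hx => (hdiffAt m x hx).differentiableWithinAt
    exact hglob.congr (fun x hx => iteratedFDerivWithin_of_isOpen m huo hx)
  have hgC : ContDiff ℝ ((k : ℕ∞) : WithTop ℕ∞) g := by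
    have h1 : ContDiff ℝ ((k : ℕ∞) : WithTop ℕ∞) (fun y : ℝ => (Complex.I * y : ℂ)) :=
      contDiff_const.mul Complex.ofRealCLM.contDiff
    exact (Complex.contDiff_exp.of_le le_top).comp h1
  have hkW : (k : WithTop ℕ∞) ≤ ((k : ℕ∞) : WithTop ℕ∞) := by exact_mod_cast le_rfl
  have habs : (0:ℝ) ≤ |t| := abs_nonneg t
  have habs1 : (1:ℝ) ≤ 1 + |t| := by linarith
  constructor
  · -- case ‖ξ‖ ≥ 1
    intro hξ1
    have hξ0 : ξ ≠ 0 := by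
      intro h; rw [h, norm_zero] at hξ1; linarith
    set D : ℝ := M * (1 + |t|) with hD
    have hD1 : 1 ≤ D := by rw [hD]; nlinarith
    have hcomp := norm_iteratedFDerivWithin_comp_le hgC.contDiffOn hCD hkW
      uniqueDiffOn_univ huo.uniqueDiffOn (Set.mapsTo_univ ψ _) hξ0
      (C := 1) (D := D) ?_ ?_
    · rw [hfun, ← iteratedFDerivWithin_of_isOpen k huo hξ0]
      calc ‖iteratedFDerivWithin ℝ k (g ∘ ψ) {η : EuclideanSpace ℝ (Fin n) | η ≠ 0} ξ‖
          ≤ (k.factorial : ℝ) * 1 * D ^ k := hcomp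
        _ = (k.factorial : ℝ) * M ^ k * (1 + |t|) ^ k := by rw [hD, mul_pow]; ring
    · intro i _
      rw [iteratedFDerivWithin_univ]
      exact le_of_eq (aux_exp_norm i (ψ ξ))
    · intro i h1i hik
      rw [iteratedFDerivWithin_of_isOpen i huo hξ0]
      have hz : ‖ξ‖ ^ ((1:ℤ) - i) ≤ 1 := by
        apply zpow_le_one_of_nonpos₀ hξ1
        have : (1:ℤ) ≤ (i:ℤ) := by exact_mod_cast h1i
        omega
      have hz0 : (0:ℝ) ≤ ‖ξ‖ ^ ((1:ℤ) - i) := zpow_nonneg (norm_nonneg ξ) _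
      have h1' : c i * ‖ξ‖ ^ ((1:ℤ)-i) * |t| ≤ M * 1 * (1 + |t|) := by
        apply mul_le_mul (mul_le_mul (hMc i hik) hz hz0 hM0) (by linarith) habs (by positivity)
      have h3' : D ≤ D ^ i := le_self_pow₀ hD1 (by omega)
      calc ‖iteratedFDeriv ℝ i ψ ξ‖ ≤ c i * ‖ξ‖ ^ ((1:ℤ)-i) * |t| := hψbd i ξ hξ0
        _ ≤ M * 1 * (1 + |t|) := h1'
        _ = D := by rw [hD]; ring
        _ ≤ D ^ i := h3'
  · -- case 0 < ‖ξ‖ < 1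
    intro hξ0 hξ1
    have hxp : (0:ℝ) < ‖ξ‖ := norm_pos_iff.2 hξ0
    have hk0 : (0:ℝ) < (k:ℝ) := by exact_mod_cast (by omega : 0 < k)
    set D : ℝ := M * (1 + |t|) * ‖ξ‖ ^ (((1:ℝ) - k)/k) with hD
    have hA1 : 1 ≤ M * (1 + |t|) := by nlinarith
    have hcomp := norm_iteratedFDerivWithin_comp_le hgC.contDiffOn hCD hkW
      uniqueDiffOn_univ huo.uniqueDiffOn (Set.mapsTo_univ ψ _) hξ0
      (C := 1) (D := D) ?_ ?_
    · rw [hfun, ← iteratedFDerivWithin_of_isOpen k huo hξ0]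
      have hDk : D ^ k = M ^ k * (1 + |t|) ^ k * ‖ξ‖ ^ ((1:ℤ) - k) := by
        rw [hD, mul_pow, mul_pow, ← Real.rpow_natCast (‖ξ‖ ^ (((1:ℝ) - k)/k)) k,
          ← Real.rpow_mul hxp.le, div_mul_cancel₀ _ (ne_of_gt hk0),
          ← Real.rpow_intCast ‖ξ‖ ((1:ℤ) - k)]
        norm_num
      calc ‖iteratedFDerivWithin ℝ k (g ∘ ψ) {η : EuclideanSpace ℝ (Fin n) | η ≠ 0} ξ‖
          ≤ (k.factorial : ℝ) * 1 * D ^ k := hcomp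
        _ = (k.factorial : ℝ) * M ^ k * (1 + |t|) ^ k * ‖ξ‖ ^ ((1:ℤ) - k) := by
            rw [hDk]; ring
    · intro i _
      rw [iteratedFDerivWithin_univ]
      exact le_of_eq (aux_exp_norm i (ψ ξ))
    · intro i h1i hik
      rw [iteratedFDerivWithin_of_isOpen i huo hξ0]
      have hik' : (i:ℝ) ≤ (k:ℝ) := by exact_mod_cast hik
      have hb : ‖ξ‖ ^ ((1:ℤ) - i) = ‖ξ‖ ^ ((1:ℝ) - i) := by
        rw [← Real.rpow_intCast ‖ξ‖ ((1:ℤ) - i)]; norm_num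
      have hexp_le : ((1:ℝ) - k)/k * i ≤ 1 - i := by
        rw [div_mul_eq_mul_div, div_le_iff₀ hk0]
        nlinarith
      have hmono : ‖ξ‖ ^ ((1:ℝ) - i) ≤ ‖ξ‖ ^ (((1:ℝ) - k)/k * i) :=
        Real.rpow_le_rpow_of_exponent_ge hxp hξ1.le hexp_le
      have hDi : D ^ i = (M * (1 + |t|)) ^ i * ‖ξ‖ ^ (((1:ℝ) - k)/k * i) := by
        rw [hD, mul_pow, ← Real.rpow_natCast (‖ξ‖ ^ (((1:ℝ) - k)/k)) i,
          ← Real.rpow_mul hxp.le]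
      have hct : c i * |t| ≤ M * (1 + |t|) := by nlinarith [hc0 i, hMc i hik]
      calc ‖iteratedFDeriv ℝ i ψ ξ‖ ≤ c i * ‖ξ‖ ^ ((1:ℤ)-i) * |t| := hψbd i ξ hξ0
        _ = (c i * |t|) * ‖ξ‖ ^ ((1:ℝ) - i) := by rw [hb]; ring
        _ ≤ (M * (1 + |t|)) ^ i * ‖ξ‖ ^ (((1:ℝ) - k)/k * i) := by
            apply mul_le_mul (hct.trans (le_self_pow₀ hA1 (by omega))) hmono
              (Real.rpow_nonneg hxp.le _) (by positivity)
        _ = D ^ i := hDi.symm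
end
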